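/- Let f : ℂ × ℂ → ℂ be holomorphic on the bidisk 𝔻 × 𝔻 = {(z,w) ∈ ℂ × ℂ : |z| < 1 and |w| < 1}, let g₊ : ℂ × ℂ → ℂ be holomorphic on O, let g₋ : ℂ × ℂ → ℂ be holomorphic on {(u,v) ∈ ℂ × ℂ : u ≠ 0 and u·v ≠ 1}, and suppose g₊(z,w) = g₋(1/w, 1/z) for all z, w ∈ ℂ ∖ {0} with z·w ≠ 1 (this encodes g holomorphic on Ω₊, the part of Ω where the second coordinate is finite). Then for every ℏ ∈ 𝒟 and every (z,w) ∈ 𝔻 × 𝔻 the series defining the module product converges absolutely: the function n ↦ ‖((−1)^n / n!) · (1/(−1/ℏ)_{n↓}) · D^{n,0} g₊(z,w) · D^{0,n} f(z,w)‖ is summable over n ∈ ℕ. -/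

import Mathlib

/-- The domain `O = {(z,w) ∈ ℂ² : z·w ≠ 1}`. -/
def Oset : Set (ℂ × ℂ) := {p | p.1 * p.2 ≠ 1}

/-- The Peschl–Minda derivative of order `(m,n)` of `f` at `(z,w)`. -/
noncomputable def PM (m n : ℕ) (f : ℂ × ℂ → ℂ) (z w : ℂ) : ℂ :=
  iteratedDeriv n (fun v => iteratedDeriv m
    (fun u => f ((z + u) / (1 + w * u), (w + v) / (1 + z * v))) 0) 0

/-- The falling factorial `(x)_{n↓} = x(x−1)⋯(x−n+1)`. -/
noncomputable def ffall (x : ℂ) (n : ℕ) : ℂ := ∏ j ∈ Finset.range n, (x - j)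

/-- The deformation domain `𝒟 = ℂ* ∖ {−1/n : n ∈ ℕ}`. -/
def Dset : Set ℂ := {h | h ≠ 0 ∧ ∀ n : ℕ, 0 < n → h ≠ -1 / (n : ℂ)}

open Metric in
lemma cauchy_bound {φ : ℂ → ℂ} {r : ℝ} (hr : 0 < r)
    (hd : DifferentiableOn ℂ φ (closedBall (0:ℂ) r)) :
    ∃ C : ℝ, 0 ≤ C ∧ ∀ n : ℕ, ‖iteratedDeriv n φ 0‖ * (r/2)^n ≤ n.factorial * C := by
  set R : NNReal := r.toNNReal with hR
  have hRr : (R : ℝ) = r := Real.coe_toNNReal r hr.le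
  have hRpos : 0 < R := by
    rw [← NNReal.coe_lt_coe, hRr]; exact hr
  have hd' : DifferentiableOn ℂ φ (closedBall (0:ℂ) R) := by rwa [hRr]
  have h := hd'.hasFPowerSeriesOnBall hRpos
  set p := cauchyPowerSeries φ 0 R with hp
  have hrad : ((R/2 : NNReal) : ENNReal) < p.radius := by
    refine lt_of_lt_of_le ?_ h.r_le
    rw [ENNReal.coe_lt_coe]
    exact NNReal.half_lt_self hRpos.ne'
  obtain ⟨C, hC, hb⟩ := p.norm_mul_pow_le_of_lt_radius hrad
  refine ⟨C, hC.le, fun n => ?_⟩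
  have hDn : ‖iteratedDeriv n φ 0‖ ≤ n.factorial * ‖p n‖ := by
    have h1 : iteratedDeriv n φ 0 = iteratedFDeriv ℂ n φ 0 (fun _ => (1:ℂ)) :=
      iteratedDeriv_eq_iteratedFDeriv
    have h2 := h.factorial_smul (1:ℂ) n
    rw [h1, ← h2]
    rw [nsmul_eq_mul, norm_mul, Complex.norm_natCast]
    gcongr
    calc ‖p n (fun _ => (1:ℂ))‖ ≤ ‖p n‖ * ∏ _i : Fin n, ‖(1:ℂ)‖ :=
          (p n).le_opNorm _
      _ = ‖p n‖ := by simp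
  calc ‖iteratedDeriv n φ 0‖ * (r/2)^n ≤ (n.factorial * ‖p n‖) * (r/2)^n := by
        gcongr
    _ = n.factorial * (‖p n‖ * ((R/2 : NNReal) : ℝ)^n) := by
        push_cast [hRr]; ring
    _ ≤ n.factorial * C := by
        have := hb n
        gcongr

lemma PM_left (g : ℂ × ℂ → ℂ) (z w : ℂ) (n : ℕ) :
    PM n 0 g z w = iteratedDeriv n (fun u => g ((z + u) / (1 + w * u), w)) 0 := by
  simp [PM]

lemma PM_right (g : ℂ × ℂ → ℂ) (z w : ℂ) (n : ℕ) :
    PM 0 n g z w = iteratedDeriv n (fun v => g (z, (w + v) / (1 + z * v))) 0 := by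
  simp [PM]

lemma ffall_ne_zero {ℏ : ℂ} (hℏ : ℏ ∈ Dset) (n : ℕ) : ffall (-1 / ℏ) n ≠ 0 := by
  obtain ⟨h0, hn⟩ := hℏ
  refine Finset.prod_ne_zero_iff.2 fun j _ => ?_
  intro hj
  rw [sub_eq_zero] at hj
  rcases Nat.eq_zero_or_pos j with hj0 | hj0
  · subst hj0
    simp only [Nat.cast_zero, div_eq_zero_iff, neg_eq_zero, one_ne_zero, false_or] at hj
    exact h0 hj
  · refine hn j hj0 ?_
    have hjne : (j : ℂ) ≠ 0 := Nat.cast_ne_zero.2 hj0.ne'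
    field_simp at hj ⊢
    linear_combination -hj

open Filter Metric in
lemma exists_entire {gp gm : ℂ × ℂ → ℂ}
    (hgp : DifferentiableOn ℂ gp Oset)
    (hgm : DifferentiableOn ℂ gm {p : ℂ × ℂ | p.1 ≠ 0 ∧ p.1 * p.2 ≠ 1})
    (hcompat : ∀ z w : ℂ, z ≠ 0 → w ≠ 0 → z * w ≠ 1 → gp (z, w) = gm (1 / w, 1 / z))
    {z w : ℂ} (hzw : z * w ≠ 1) :
    ∃ G : ℂ → ℂ, Differentiable ℂ G ∧
      (fun u => gp ((z + u) / (1 + w * u), w)) =ᶠ[nhds 0] G := by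
  have hOopen : IsOpen Oset := by
    have : Oset = (fun p : ℂ × ℂ => p.1 * p.2) ⁻¹' {(1:ℂ)}ᶜ := rfl
    rw [this]
    exact (isOpen_compl_singleton).preimage (continuous_fst.mul continuous_snd)
  have hgmopen : IsOpen {p : ℂ × ℂ | p.1 ≠ 0 ∧ p.1 * p.2 ≠ 1} := by
    have : {p : ℂ × ℂ | p.1 ≠ 0 ∧ p.1 * p.2 ≠ 1}
        = (Prod.fst ⁻¹' {(0:ℂ)}ᶜ) ∩ ((fun p : ℂ × ℂ => p.1 * p.2) ⁻¹' {(1:ℂ)}ᶜ) := rfl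
    rw [this]
    exact ((isOpen_compl_singleton).preimage continuous_fst).inter
      ((isOpen_compl_singleton).preimage (continuous_fst.mul continuous_snd))
  have key : ∀ u : ℂ, 1 + w * u ≠ 0 → ((z + u) / (1 + w * u)) * w ≠ 1 := by
    intro u hu h
    apply hzw
    rw [div_mul_eq_mul_div, div_eq_one_iff_eq hu] at h
    linear_combination h
  have g1diff : ∀ u : ℂ, 1 + w * u ≠ 0 →
      DifferentiableAt ℂ (fun u => gp ((z + u) / (1 + w * u), w)) u := by
    intro u hu
    have h1 : DifferentiableAt ℂ (fun u : ℂ => z + u) u := by fun_prop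
    have h2 : DifferentiableAt ℂ (fun u : ℂ => 1 + w * u) u := by fun_prop
    have hinner : DifferentiableAt ℂ (fun u : ℂ => ((z + u) / (1 + w * u), w)) u :=
      DifferentiableAt.prodMk (h1.div h2 hu) (differentiableAt_const w)
    exact (hgp.differentiableAt (hOopen.mem_nhds (key u hu))).comp u hinner
  by_cases hw0 : w = 0
  · subst hw0
    exact ⟨_, fun u => g1diff u (by simp), EventuallyEq.rfl⟩
  · set c : ℂ := -1 / w with hc
    have hc0 : c ≠ 0 := by
      rw [hc, neg_div]
      exact neg_ne_zero.2 (one_div_ne_zero hw0)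
    have hwc : 1 + w * c = 0 := by
      rw [hc]; field_simp; norm_num
    have hmemden : ∀ x : ℂ, x ≠ c → 1 + w * x ≠ 0 := by
      intro x hx h
      apply hx
      rw [hc]
      field_simp
      linear_combination h
    have hkey2 : ∀ x : ℂ, z + x ≠ 0 → (1 / w) * ((1 + w * x) / (z + x)) ≠ 1 := by
      intro x hx h
      apply hzw
      field_simp at h
      linear_combination -h
    refine ⟨Function.update (fun u => gp ((z + u) / (1 + w * u), w)) c (gm (1 / w, 0)),
      ?_, ?_⟩
    · intro u
      by_cases huc : u = c
      · subst huc
        have hzc : z + c ≠ 0 := by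
          intro h
          apply hzw
          rw [hc] at h
          field_simp at h
          linear_combination h
        have hHdiff : DifferentiableAt ℂ (fun x => gm (1 / w, (1 + w * x) / (z + x))) c := by
          have h1 : DifferentiableAt ℂ (fun x : ℂ => 1 + w * x) c := by fun_prop
          have h2 : DifferentiableAt ℂ (fun x : ℂ => z + x) c := by fun_prop
          have hinner : DifferentiableAt ℂ
              (fun x : ℂ => ((1 / w : ℂ), (1 + w * x) / (z + x))) c :=
            DifferentiableAt.prodMk (differentiableAt_const _) (h1.div h2 hzc)
          exact (hgm.differentiableAt (hgmopen.mem_nhds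
            ⟨one_div_ne_zero hw0, hkey2 c hzc⟩)).comp c hinner
        refine hHdiff.congr_of_eventuallyEq ?_
        have hopen : ∀ᶠ x in nhds c, z + x ≠ 0 := by
          have : ∀ᶠ x in nhds c, x ≠ -z :=
            eventually_ne_nhds (by intro h; exact hzc (by rw [h]; ring))
          filter_upwards [this] with x hx h
          exact hx (by linear_combination h)
        filter_upwards [hopen] with x hx
        by_cases hxc : x = c
        · subst hxc
          rw [Function.update_self, hwc, zero_div]
        · rw [Function.update_of_ne hxc]
          have hden := hmemden x hxc
          have hZ : (z + x) / (1 + w * x) ≠ 0 := div_ne_zero hx hden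
          rw [hcompat _ _ hZ hw0 (key x hden), one_div_div]
      · have hden := hmemden u huc
        refine (g1diff u hden).congr_of_eventuallyEq ?_
        filter_upwards [eventually_ne_nhds huc] with x hx
        exact Function.update_of_ne hx _ _
    · filter_upwards [eventually_ne_nhds (Ne.symm hc0)] with x hx
      exact (Function.update_of_ne hx (gm (1 / w, 0))
        (fun u => gp ((z + u) / (1 + w * u), w))).symm

open Metric in
lemma exists_radius {f : ℂ × ℂ → ℂ}
    (hf : DifferentiableOn ℂ f {p : ℂ × ℂ | ‖p.1‖ < 1 ∧ ‖p.2‖ < 1})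
    {z w : ℂ} (hz : ‖z‖ < 1) (hw : ‖w‖ < 1) :
    ∃ ε : ℝ, 0 < ε ∧ DifferentiableOn ℂ
      (fun v => f (z, (w + v) / (1 + z * v))) (closedBall (0:ℂ) ε) := by
  have hbiopen : IsOpen {p : ℂ × ℂ | ‖p.1‖ < 1 ∧ ‖p.2‖ < 1} := by
    have : {p : ℂ × ℂ | ‖p.1‖ < 1 ∧ ‖p.2‖ < 1}
        = {p : ℂ × ℂ | ‖p.1‖ < 1} ∩ {p : ℂ × ℂ | ‖p.2‖ < 1} := rfl
    rw [this]
    exact (isOpen_lt (continuous_norm.comp continuous_fst) continuous_const).inter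
      (isOpen_lt (continuous_norm.comp continuous_snd) continuous_const)
  set V : Set ℂ := {v | 1 + z * v ≠ 0 ∧ ‖(w + v) / (1 + z * v)‖ < 1} with hV
  have hVopen : IsOpen V := by
    have : V = {v : ℂ | 1 + z * v ≠ 0} ∩
        ((fun v : ℂ => (w + v) / (1 + z * v)) ⁻¹' {x : ℂ | ‖x‖ < 1}) := rfl
    rw [this]
    refine ContinuousOn.isOpen_inter_preimage ?_ ?_ ?_
    · exact ContinuousOn.div (by fun_prop) (by fun_prop) (fun v hv => hv)
    · exact (isOpen_compl_singleton).preimage (by fun_prop)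
    · exact isOpen_lt continuous_norm continuous_const
  have h0V : (0:ℂ) ∈ V := by
    constructor
    · simp
    · simpa using hw
  obtain ⟨δ, hδ, hball⟩ := Metric.isOpen_iff.1 hVopen 0 h0V
  refine ⟨δ/2, by linarith, ?_⟩
  intro v hv
  have hvV : v ∈ V := hball (closedBall_subset_ball (by linarith) hv)
  obtain ⟨hden, habs⟩ := hvV
  have h1 : DifferentiableAt ℂ (fun v : ℂ => w + v) v := by fun_prop
  have h2 : DifferentiableAt ℂ (fun v : ℂ => 1 + z * v) v := by fun_prop
  have hinner : DifferentiableAt ℂ (fun v : ℂ => (z, (w + v) / (1 + z * v))) v :=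
    DifferentiableAt.prodMk (differentiableAt_const z) (h1.div h2 hden)
  have hmem : ((z, (w + v) / (1 + z * v)) : ℂ × ℂ) ∈
      {p : ℂ × ℂ | ‖p.1‖ < 1 ∧ ‖p.2‖ < 1} := ⟨hz, habs⟩
  have hfd : DifferentiableAt ℂ f (z, (w + v) / (1 + z * v)) :=
    hf.differentiableAt (hbiopen.mem_nhds hmem)
  exact (hfd.comp v hinner).differentiableWithinAt

lemma ratio_sum {a : ℂ} (hff : ∀ n, ffall a n ≠ 0) {K : ℝ} (hK : 0 ≤ K) :
    Summable (fun n : ℕ => (n.factorial : ℝ) * K * (1/2)^n / ‖ffall a n‖) := by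
  apply summable_of_ratio_norm_eventually_le (r := 3/4) (by norm_num)
  obtain ⟨N, hN⟩ := exists_nat_ge (3*‖a‖ + 2)
  filter_upwards [Filter.eventually_ge_atTop N] with n hn
  have hffpos : 0 < ‖ffall a n‖ := norm_pos_iff.2 (hff n)
  have hffpos' : 0 < ‖ffall a (n+1)‖ := norm_pos_iff.2 (hff (n+1))
  have hQ : ‖ffall a (n+1)‖ = ‖ffall a n‖ * ‖a - (n:ℂ)‖ := by
    have h1 : ffall a (n+1) = ffall a n * (a - (n:ℂ)) := Finset.prod_range_succ _ n
    rw [h1, norm_mul]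
  have hna : (3*‖a‖ + 2) ≤ (n:ℝ) := le_trans hN (Nat.cast_le.2 hn)
  have hlow : (n:ℝ) - ‖a‖ ≤ ‖a - (n:ℂ)‖ := by
    calc (n:ℝ) - ‖a‖ = ‖((n:ℕ):ℂ)‖ - ‖a‖ := by rw [Complex.norm_natCast]
      _ ≤ ‖((n:ℕ):ℂ) - a‖ := norm_sub_norm_le _ _
      _ = ‖a - ((n:ℕ):ℂ)‖ := norm_sub_rev _ _
  have hb1 : (0:ℝ) ≤ (n.factorial : ℝ) * K * (1/2)^n / ‖ffall a n‖ :=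
    div_nonneg (mul_nonneg (mul_nonneg (by positivity) hK) (by positivity)) (norm_nonneg _)
  have hb2 : (0:ℝ) ≤ ((n+1).factorial : ℝ) * K * (1/2)^(n+1) / ‖ffall a (n+1)‖ :=
    div_nonneg (mul_nonneg (mul_nonneg (by positivity) hK) (by positivity)) (norm_nonneg _)
  rw [Real.norm_of_nonneg hb2, Real.norm_of_nonneg hb1]
  have hkey : ((n:ℝ)+1) * (1/2) ≤ 3/4 * ‖a - (n:ℂ)‖ := by nlinarith [norm_nonneg a]
  have hQpos : 0 < ‖a - (n:ℂ)‖ := by nlinarith [norm_nonneg a]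
  rw [hQ, div_le_iff₀ (by positivity)]
  have hfact : (((n+1).factorial : ℕ) : ℝ) = ((n:ℝ)+1) * (n.factorial : ℝ) := by
    rw [Nat.factorial_succ]; push_cast; ring
  have hrD : ∀ D : ℝ, 3 / 4 * (D / ‖ffall a n‖) * (‖ffall a n‖ * ‖a - (n:ℂ)‖)
      = 3 / 4 * ‖a - (n:ℂ)‖ * D := by
    intro D
    have hPne : ‖ffall a n‖ ≠ 0 := hffpos.ne'
    field_simp [hPne]
  have hr := hrD ((n.factorial : ℝ) * K * (1/2)^n)
  rw [hr]
  have base : (0:ℝ) ≤ (n.factorial : ℝ) * K * (1/2)^n :=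
    mul_nonneg (mul_nonneg (by positivity) hK) (by positivity)
  have hstep := mul_le_mul_of_nonneg_right hkey base
  calc ((n+1).factorial : ℝ) * K * (1/2)^(n+1)
      = ((n:ℝ)+1) * (1/2) * ((n.factorial : ℝ) * K * (1/2)^n) := by rw [hfact]; ring
    _ ≤ 3/4 * ‖a - (n:ℂ)‖ * ((n.factorial : ℝ) * K * (1/2)^n) := hstep

/-- absolute convergence of the module product series on the bidisk, for
`f` holomorphic on `𝔻 × 𝔻` and `g` holomorphic on `Ω₊` (encoded by the pair `(g₊,g₋)`). -/
theorem stmt19 (f : ℂ × ℂ → ℂ)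
    (hf : DifferentiableOn ℂ f
      {p : ℂ × ℂ | ‖p.1‖ < 1 ∧ ‖p.2‖ < 1})
    (gp gm : ℂ × ℂ → ℂ)
    (hgp : DifferentiableOn ℂ gp Oset)
    (hgm : DifferentiableOn ℂ gm {p : ℂ × ℂ | p.1 ≠ 0 ∧ p.1 * p.2 ≠ 1})
    (hcompat : ∀ z w : ℂ, z ≠ 0 → w ≠ 0 → z * w ≠ 1 → gp (z, w) = gm (1 / w, 1 / z))
    (ℏ : ℂ) (hℏ : ℏ ∈ Dset)
    (z w : ℂ) (hz : ‖z‖ < 1) (hw : ‖w‖ < 1) :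
    Summable (fun n : ℕ =>
      ‖((-1 : ℂ) ^ n / (n.factorial : ℂ)) * (1 / ffall (-1 / ℏ) n)
        * PM n 0 gp z w * PM 0 n f z w‖) := by
  have hzw : z * w ≠ 1 := by
    intro h
    have h1 : ‖z * w‖ = 1 := by rw [h]; simp
    rw [norm_mul] at h1
    nlinarith [norm_nonneg z, norm_nonneg w]
  obtain ⟨G, hGdiff, hGeq⟩ := exists_entire hgp hgm hcompat hzw
  obtain ⟨ε, hε, hFdiff⟩ := exists_radius hf hz hw
  have hεne : ε ≠ 0 := hε.ne'
  obtain ⟨Cg, hCg, hbg⟩ := cauchy_bound (r := 8/ε) (by positivity)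
    (hGdiff.differentiableOn)
  obtain ⟨Cf, hCf, hbf⟩ := cauchy_bound hε hFdiff
  have hff := ffall_ne_zero hℏ
  have hsum := ratio_sum hff (mul_nonneg hCg hCf)
  refine Summable.of_nonneg_of_le (fun n => norm_nonneg _) (fun n => ?_) hsum
  rw [PM_left, PM_right]
  have hgiter : iteratedDeriv n (fun u => gp ((z + u) / (1 + w * u), w)) 0
      = iteratedDeriv n G 0 := Filter.EventuallyEq.iteratedDeriv_eq n hGeq
  rw [hgiter]
  set D1 := iteratedDeriv n G 0 with hD1
  set D2 := iteratedDeriv n (fun v => f (z, (w + v) / (1 + z * v))) 0 with hD2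
  have hnorm : ‖((-1 : ℂ) ^ n / (n.factorial : ℂ)) * (1 / ffall (-1 / ℏ) n) * D1 * D2‖
      = (1/(n.factorial : ℝ)) * (1/‖ffall (-1 / ℏ) n‖) * ‖D1‖ * ‖D2‖ := by
    simp [norm_mul, norm_div, norm_pow, Complex.norm_natCast]
  rw [hnorm]
  have hg := hbg n
  have hf' := hbf n
  have hmul := mul_le_mul hg hf' (mul_nonneg (norm_nonneg _) (by positivity))
    (mul_nonneg (by positivity) hCg)
  have h2 : ((8/ε)/2) * (ε/2) = 2 := by field_simp; ring
  have hDD : ‖D1‖ * ‖D2‖ * 2^n ≤ (n.factorial : ℝ) * Cg * ((n.factorial : ℝ) * Cf) := by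
    calc ‖D1‖ * ‖D2‖ * 2^n = ‖D1‖ * ‖D2‖ * (((8/ε)/2) * (ε/2))^n := by rw [h2]
      _ = (‖D1‖ * ((8/ε)/2)^n) * (‖D2‖ * (ε/2)^n) := by rw [mul_pow]; ring
      _ ≤ (n.factorial : ℝ) * Cg * ((n.factorial : ℝ) * Cf) := hmul
  have hhalf : (2:ℝ)^n * (1/2)^n = 1 := by
    rw [← mul_pow]; norm_num
  have hDD2 : ‖D1‖ * ‖D2‖ ≤ (n.factorial : ℝ) * Cg * ((n.factorial : ℝ) * Cf) * (1/2)^n := by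
    have := mul_le_mul_of_nonneg_right hDD (show (0:ℝ) ≤ (1/2)^n by positivity)
    calc ‖D1‖ * ‖D2‖ = ‖D1‖ * ‖D2‖ * (2^n * (1/2)^n) := by rw [hhalf, mul_one]
      _ = ‖D1‖ * ‖D2‖ * 2^n * (1/2)^n := by ring
      _ ≤ (n.factorial : ℝ) * Cg * ((n.factorial : ℝ) * Cf) * (1/2)^n := this
  have hP : 0 < ‖ffall (-1 / ℏ) n‖ := norm_pos_iff.2 (hff n)
  have hfa : 0 < (n.factorial : ℝ) := by positivity
  rw [div_eq_mul_inv ((n.factorial : ℝ) * (Cg * Cf) * (1/2)^n), ← one_div]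
  calc (1/(n.factorial : ℝ)) * (1/‖ffall (-1 / ℏ) n‖) * ‖D1‖ * ‖D2‖
      = (‖D1‖ * ‖D2‖) * (1/(n.factorial : ℝ)) * (1/‖ffall (-1 / ℏ) n‖) := by ring
    _ ≤ ((n.factorial : ℝ) * Cg * ((n.factorial : ℝ) * Cf) * (1/2)^n)
        * (1/(n.factorial : ℝ)) * (1/‖ffall (-1 / ℏ) n‖) := by
        gcongr
    _ = ((n.factorial : ℝ) * Cg * ((n.factorial : ℝ) * Cf) * (1/2)^n * (1/(n.factorial : ℝ)))
        * (1/‖ffall (-1 / ℏ) n‖) := by ring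
    _ = (n.factorial : ℝ) * (Cg * Cf) * (1/2)^n * (1/‖ffall (-1 / ℏ) n‖) := by
        congr 1
        have hcan : (n.factorial : ℝ) * (1/(n.factorial : ℝ)) = 1 := by
          field_simp
        linear_combination ((n.factorial : ℝ) * Cg * Cf * (1/2)^n) * hcan
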